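/- Let τ and σ be π-compatible topologies on a set X. Then a subset A ⊆ X is meager in (X, τ) if and only if it is meager in (X, σ). -/

import Mathlib

open Topology Set

/-- Topologies `τ` and `σ` on `X` are π-compatible if each is a π-network for the
other: every nonempty open set of either topology contains a nonempty open set of
the other topology. -/
def PiCompatible {X : Type*} (τ σ : TopologicalSpace X) : Prop :=
  (∀ O : Set X, IsOpen[σ] O → O.Nonempty → ∃ V : Set X, IsOpen[τ] V ∧ V.Nonempty ∧ V ⊆ O) ∧
  (∀ O : Set X, IsOpen[τ] O → O.Nonempty → ∃ V : Set X, IsOpen[σ] V ∧ V.Nonempty ∧ V ⊆ O)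

/-! Nowhere density and meagreness depend only on the nonempty open sets up to mutual
refinement: a set is nowhere dense iff every nonempty open set contains a nonempty open set
missing it, and this condition passes through π-compatible topologies by shrinking twice. -/

lemma isNowhereDense_iff_forall_isOpen_exists_disjoint {X : Type*} [TopologicalSpace X]
    {N : Set X} :
    IsNowhereDense N ↔
      ∀ U : Set X, IsOpen U → U.Nonempty → ∃ V : Set X, IsOpen V ∧ V.Nonempty ∧ V ⊆ U ∧
        Disjoint V N := by
  constructor
  · intro hN U hU hUne
    have hU_not_sub : ¬ U ⊆ closure N := fun hsub ↦
      hUne.ne_empty <| subset_empty_iff.mp <| hN ▸ hU.subset_interior_iff.mpr hsub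
    obtain ⟨x, hxU, hxN⟩ := not_subset.mp hU_not_sub
    exact ⟨U \ closure N, hU.sdiff isClosed_closure, ⟨x, hxU, hxN⟩, sdiff_subset,
      disjoint_sdiff_left.mono_right subset_closure⟩
  · intro H
    rw [IsNowhereDense, ← not_nonempty_iff_eq_empty]
    intro hne
    obtain ⟨V, hV, ⟨x, hxV⟩, hVsub, hVN⟩ := H _ isOpen_interior hne
    exact (hVN.closure_right hV).notMem_of_mem_left hxV (interior_subset (hVsub hxV))

namespace PiCompatible

variable {X : Type*} {τ σ : TopologicalSpace X}

lemma symm (h : PiCompatible τ σ) : PiCompatible σ τ := ⟨h.2, h.1⟩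

lemma isNowhereDense {N : Set X} (h : PiCompatible τ σ) (hN : @IsNowhereDense X τ N) :
    @IsNowhereDense X σ N := by
  rw [@isNowhereDense_iff_forall_isOpen_exists_disjoint X τ] at hN
  rw [@isNowhereDense_iff_forall_isOpen_exists_disjoint X σ]
  intro U hU hUne
  obtain ⟨V, hV, hVne, hVU⟩ := h.1 U hU hUne
  obtain ⟨W, hW, hWne, hWV, hWN⟩ := hN V hV hVne
  obtain ⟨W', hW', hW'ne, hW'W⟩ := h.2 W hW hWne
  exact ⟨W', hW', hW'ne, hW'W.trans (hWV.trans hVU), hWN.mono_left hW'W⟩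

lemma isMeagre {A : Set X} (h : PiCompatible τ σ) (hA : @IsMeagre X τ A) : @IsMeagre X σ A := by
  rw [@isMeagre_iff_countable_union_isNowhereDense X τ] at hA
  rw [@isMeagre_iff_countable_union_isNowhereDense X σ]
  obtain ⟨S, hS, hSc, hAS⟩ := hA
  exact ⟨S, fun t ht ↦ h.isNowhereDense (hS t ht), hSc, hAS⟩

end PiCompatible

theorem stmt_6 {X : Type*} (τ σ : TopologicalSpace X) (h : PiCompatible τ σ) :
    ∀ A : Set X, @IsMeagre X τ A ↔ @IsMeagre X σ A :=
  fun _ ↦ ⟨h.isMeagre, h.symm.isMeagre⟩
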